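/- Let H₀ and H₁ be real Hilbert spaces, each equipped with a continuous linear map J_i : H_i → H_i satisfying J_i ∘ J_i = −Id and ⟨J_i x, J_i y⟩ = ⟨x, y⟩ for all x, y, with symplectic forms ω_i(x, y) = ⟨J_i x, y⟩ (i = 0, 1). Let S : H₀ → H₁ be a linear map defined on all of H₀ (not assumed continuous) with dense range such that ω₁(S x, S y) = ω₀(x, y) for all x, y ∈ H₀. Then S is continuous, and the graph G_S = {(x, S x) : x ∈ H₀} is a Lagrangian subspace of the product H₀ × H₁ equipped with the symplectic form Ω((x, a), (y, b)) = ω₀(x, y) − ω₁(a, b); that is, G_S equals its Ω-annihilator {v ∈ H₀ × H₁ : Ω(v, w) = 0 for all w ∈ G_S}. -/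
import Mathlib


open scoped RealInnerProductSpace

/-- A densely-ranged, everywhere-defined linear symplectic transformation between symplectic
Hilbert spaces is automatically continuous, and its graph is a Lagrangian subspace of
`H₀ × H₁` for the symplectic form `Ω((x,a),(y,b)) = ω₀(x,y) − ω₁(a,b)`. -/
theorem symplectic_map_continuous_and_graph_lagrangian
    {H₀ H₁ : Type*}
    [NormedAddCommGroup H₀] [InnerProductSpace ℝ H₀] [CompleteSpace H₀]
    [NormedAddCommGroup H₁] [InnerProductSpace ℝ H₁] [CompleteSpace H₁]
    (J₀ : H₀ →L[ℝ] H₀) (hJ₀2 : ∀ x : H₀, J₀ (J₀ x) = -x)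
    (hJ₀orth : ∀ x y : H₀, ⟪J₀ x, J₀ y⟫ = ⟪x, y⟫)
    (J₁ : H₁ →L[ℝ] H₁) (hJ₁2 : ∀ x : H₁, J₁ (J₁ x) = -x)
    (hJ₁orth : ∀ x y : H₁, ⟪J₁ x, J₁ y⟫ = ⟪x, y⟫)
    (S : H₀ →ₗ[ℝ] H₁) (hdense : DenseRange ⇑S)
    (hsympl : ∀ x y : H₀, ⟪J₁ (S x), S y⟫ = ⟪J₀ x, y⟫) :
    Continuous ⇑S ∧
    {v : H₀ × H₁ | ∀ w ∈ {p : H₀ × H₁ | p.2 = S p.1},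
        ⟪J₀ v.1, w.1⟫ - ⟪J₁ v.2, w.2⟫ = 0}
      = {p : H₀ × H₁ | p.2 = S p.1} := by
  -- Key: a vector whose `J₁`-pairing with the (dense) range of `S` vanishes is zero.
  have key : ∀ v : H₁, (∀ z : H₀, ⟪J₁ v, S z⟫ = 0) → v = 0 := by
    intro v hv
    have h0 : ∀ w : H₁, ⟪J₁ v, w⟫ = 0 := by
      intro w
      refine hdense.induction_on w ?_ hv
      exact isClosed_eq (continuous_const.inner continuous_id) continuous_const
    have hJv : J₁ v = 0 := by
      have := h0 (J₁ v)
      simpa [inner_self_eq_zero] using this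
    have h2 := hJ₁2 v
    rw [hJv, map_zero] at h2
    exact neg_eq_zero.mp h2.symm
  have hcont : Continuous ⇑S := by
    apply LinearMap.continuous_of_seq_closed_graph
    intro u x y hux huy
    have hzero : ∀ z : H₀, ⟪J₁ (y - S x), S z⟫ = 0 := by
      intro z
      have hl1 : Filter.Tendsto (fun n => ⟪J₁ (S (u n)), S z⟫) Filter.atTop
          (nhds ⟪J₁ y, S z⟫) :=
        Filter.Tendsto.inner ((J₁.continuous.tendsto y).comp huy) tendsto_const_nhds
      have hl2 : Filter.Tendsto (fun n => ⟪J₁ (S (u n)), S z⟫) Filter.atTop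
          (nhds ⟪J₀ x, z⟫) := by
        simp only [hsympl]
        exact Filter.Tendsto.inner ((J₀.continuous.tendsto x).comp hux) tendsto_const_nhds
      have heq : ⟪J₁ y, S z⟫ = ⟪J₀ x, z⟫ := tendsto_nhds_unique hl1 hl2
      have hx := hsympl x z
      rw [map_sub, inner_sub_left, heq, hx]
      ring
    have := key _ hzero
    exact (sub_eq_zero.mp this)
  refine ⟨hcont, ?_⟩
  ext v
  simp only [Set.mem_setOf_eq]
  constructor
  · intro h
    have hzero : ∀ z : H₀, ⟪J₁ (v.2 - S v.1), S z⟫ = 0 := by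
      intro z
      have h1 := h (z, S z) rfl
      have h2 := hsympl v.1 z
      simp only at h1
      rw [map_sub, inner_sub_left, h2]
      linarith
    have := key _ hzero
    exact sub_eq_zero.mp this
  · intro h w hw
    rw [h, hw, hsympl, sub_self]
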